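/- arXiv:1302.4808 — 3 statements merged into one kernel-verified Lean document; each statement's English description precedes it below -/
import Mathlib

section
/- Let α and β be types and let f : β → α → β be such that the map (b, a) ↦ f b a from β × α to β is injective, and suppose the seed b0 : β is not in the range of f (there are no b : β, a : α with f b a = b0). Then the map l ↦ List.foldl f b0 l is injective on all lists over α (in particular, equal chain values force equal lengths). -/
theorem foldl_injective_of_seed_not_in_range {α β : Type*} (f : β → α → β)
    (hf : Function.Injective (fun p : β × α => f p.1 p.2)) (b0 : β)
    (hb0 : ¬ ∃ (b : β) (a : α), f b a = b0) :
    Function.Injective (fun l : List α => List.foldl f b0 l) := by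
  intro l1 l2 h
  simp only at h
  induction l1 using List.reverseRecOn generalizing l2 with
  | nil =>
    cases l2 using List.reverseRecOn with
    | nil => rfl
    | append_singleton t a =>
      rw [List.foldl_append] at h
      exact absurd ⟨_, _, h.symm⟩ hb0
  | append_singleton t a ih =>
    cases l2 using List.reverseRecOn with
    | nil =>
      rw [List.foldl_append] at h
      exact absurd ⟨_, _, h⟩ hb0
    | append_singleton t' a' =>
      simp only [List.foldl_append, List.foldl_cons, List.foldl_nil] at h
      have := hf (a₁ := (List.foldl f b0 t, a)) (a₂ := (List.foldl f b0 t', a')) h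
      obtain ⟨h1, h2⟩ := Prod.mk.injEq .. ▸ this
      rw [ih h1, h2]
end

section
/- Let F be a functionality over S, O, R such that every pair of operations o1, o2 : O commutes in every state s : S. Then for every state s and all lists of operations ρ1, ρ2: execState F s (ρ1 ++ ρ2) = execState F s (ρ2 ++ ρ1), and there exist lists of responses w1, w2 with w1.length = ρ1.length such that respSeq F s (ρ1 ++ ρ2) = w1 ++ w2 and respSeq F s (ρ2 ++ ρ1) = w2 ++ w1; that is, each individual operation receives the same response regardless of which of the two sequences is executed first, and the final states agree. -/
/-- Final state of executing a list of operations in order from `s`. -/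
def execState {S O R : Type*} (F : S → O → S × R) : S → List O → S
  | s, [] => s
  | s, o :: ρ => execState F (F s o).1 ρ

/-- List of responses produced in order by executing a list of operations from `s`. -/
def respSeq {S O R : Type*} (F : S → O → S × R) : S → List O → List R
  | _, [] => []
  | s, o :: ρ => (F s o).2 :: respSeq F (F s o).1 ρ

/-- Operations `o1` and `o2` commute in state `s` w.r.t. functionality `F`:
with `(s', r1) = F s o1`, `(s'', r2) = F s' o2`, `(t', q2) = F s o2`,
`(t'', q1) = F t' o1`, we require `r1 = q1`, `r2 = q2`, `s'' = t''`. -/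
def commuteIn {S O R : Type*} (F : S → O → S × R) (s : S) (o1 o2 : O) : Prop :=
  (F s o1).2 = (F (F s o2).1 o1).2 ∧
  (F (F s o1).1 o2).2 = (F s o2).2 ∧
  (F (F s o1).1 o2).1 = (F (F s o2).1 o1).1

lemma execState_append {S O R : Type*} (F : S → O → S × R) :
    ∀ (ρ1 : List O) (s : S) (ρ2 : List O),
    execState F s (ρ1 ++ ρ2) = execState F (execState F s ρ1) ρ2
  | [], _, _ => rfl
  | o :: ρ1, s, ρ2 => by simp [execState, execState_append F ρ1]

lemma respSeq_append {S O R : Type*} (F : S → O → S × R) :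
    ∀ (ρ1 : List O) (s : S) (ρ2 : List O),
    respSeq F s (ρ1 ++ ρ2) = respSeq F s ρ1 ++ respSeq F (execState F s ρ1) ρ2
  | [], _, _ => rfl
  | o :: ρ1, s, ρ2 => by simp [respSeq, execState, respSeq_append F ρ1]

lemma swap_one {S O R : Type*} (F : S → O → S × R)
    (h : ∀ (s : S) (o1 o2 : O), commuteIn F s o1 o2) :
    ∀ (ρ : List O) (s : S) (o : O),
      (F s o).2 = (F (execState F s ρ) o).2 ∧
      respSeq F (F s o).1 ρ = respSeq F s ρ ∧
      execState F (F s o).1 ρ = (F (execState F s ρ) o).1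
  | [], _, _ => ⟨rfl, rfl, rfl⟩
  | o' :: ρ, s, o => by
    obtain ⟨h1, h2, h3⟩ := h s o o'
    obtain ⟨ih1, ih2, ih3⟩ := swap_one F h ρ (F s o').1 o
    refine ⟨?_, ?_, ?_⟩
    · simpa [execState, h1] using ih1
    · simp [respSeq, execState, h2, h3, ih2]
    · simpa [execState, h3] using ih3

lemma respSeq_execState {S O R : Type*} (F : S → O → S × R)
    (h : ∀ (s : S) (o1 o2 : O), commuteIn F s o1 o2) :
    ∀ (ρ1 : List O) (s : S) (ρ2 : List O),
      respSeq F (execState F s ρ1) ρ2 = respSeq F s ρ2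
  | [], _, _ => rfl
  | o :: ρ1, s, ρ2 => by
    simp only [execState]
    rw [respSeq_execState F h ρ1, (swap_one F h ρ2 s o).2.1]

lemma execState_comm {S O R : Type*} (F : S → O → S × R)
    (h : ∀ (s : S) (o1 o2 : O), commuteIn F s o1 o2) :
    ∀ (ρ1 : List O) (s : S) (ρ2 : List O),
      execState F (execState F s ρ1) ρ2 = execState F (execState F s ρ2) ρ1
  | [], _, _ => rfl
  | o :: ρ1, s, ρ2 => by
    simp only [execState]
    rw [execState_comm F h ρ1 (F s o).1 ρ2, (swap_one F h ρ2 s o).2.2]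

theorem append_commute_of_all_commute (S O R : Type*) (F : S → O → S × R)
    (h : ∀ (s : S) (o1 o2 : O), commuteIn F s o1 o2)
    (s : S) (ρ1 ρ2 : List O) :
    execState F s (ρ1 ++ ρ2) = execState F s (ρ2 ++ ρ1) ∧
    ∃ w1 w2 : List R, w1.length = ρ1.length ∧
      respSeq F s (ρ1 ++ ρ2) = w1 ++ w2 ∧
      respSeq F s (ρ2 ++ ρ1) = w2 ++ w1 := by
  have len : ∀ (ρ : List O) (t : S), (respSeq F t ρ).length = ρ.length := by
    intro ρ
    induction ρ with
    | nil => intro t; rfl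
    | cons o ρ ih => intro t; simp [respSeq, ih]
  refine ⟨?_, respSeq F s ρ1, respSeq F s ρ2, len ρ1 s, ?_, ?_⟩
  · rw [execState_append, execState_append, execState_comm F h]
  · rw [respSeq_append, respSeq_execState F h]
  · rw [respSeq_append, respSeq_execState F h]
end

section
/- For the non-negative counter F and all s, x, y : ℕ, the operations add x and dec y commute in state s if and only if y ≤ s or s + x < y. -/
/-- Operations on the non-negative counter. -/
inductive CounterOp
  | add (x : ℕ)
  | dec (x : ℕ)

/-- The non-negative counter functionality. -/
def counterF : ℕ → CounterOp → ℕ × Bool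
  | s, .add x => (s + x, true)
  | s, .dec x => if x ≤ s then (s - x, true) else (s, false)

theorem counter_add_dec_commute_iff (s x y : ℕ) :
    commuteIn counterF s (.add x) (.dec y) ↔ (y ≤ s ∨ s + x < y) := by
  unfold commuteIn counterF
  rcases le_or_gt y s with h|h
  · simp [h, h.trans (Nat.le_add_right s x), Nat.sub_add_comm h]
  · rcases le_or_gt y (s+x) with h2|h2
    · simp [h2, Nat.not_le.mpr h]
    · simp [Nat.not_le.mpr h, Nat.not_le.mpr h2, h2]
end
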